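/- arXiv:2212.11454 — 5 statements merged into one kernel-verified Lean document; each statement's English description precedes it below -/
import Mathlib

section
/- Let μ be a Borel probability measure on ℝ^k with compact support A* containing infinitely many points, r ∈ (0,∞), and let A_n be an n-optimal set of order r for μ. Define ‖A_n‖_∞ = max_{a ∈ A_n} max_{x ∈ W(a|A_n) ∩ A*} ρ(x,a), where W(a|A_n) is the Voronoi region of a. Then (‖A_n‖_∞ / 2)^r · min_{x ∈ A*} μ(B(x, ‖A_n‖_∞/2)) ≤ V_{n,r}(μ). -/
open scoped Classical
open MeasureTheory Metric

/-- the `n`-th quantization error of order `r` of a measure on ℝ^k. -/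
noncomputable def quantErr {k : ℕ} (μ : Measure (EuclideanSpace ℝ (Fin k)))
    (n : ℕ) (r : ℝ) : ℝ :=
  sInf {v | ∃ A : Finset (EuclideanSpace ℝ (Fin k)), A.Nonempty ∧ A.card ≤ n ∧
    v = ∫ x, Metric.infDist x ↑A ^ r ∂μ}

/-- Voronoi region of `a` in `A`. -/
def voronoi {k : ℕ} (a : EuclideanSpace ℝ (Fin k))
    (A : Finset (EuclideanSpace ℝ (Fin k))) : Set (EuclideanSpace ℝ (Fin k)) :=
  {x | dist x a = Metric.infDist x ↑A}

/-!
A point `x₀ ∈ A*` realising `‖A_n‖_∞` lies at distance `‖A_n‖_∞` from `A_n`, so every point of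
the ball `B(x₀, ‖A_n‖_∞ / 2)` lies at distance at least `‖A_n‖_∞ / 2` from `A_n`. Markov's
inequality then bounds `V_{n,r} = ∫ ρ(x, A_n)^r dμ` from below by
`(‖A_n‖_∞ / 2)^r · μ(B(x₀, ‖A_n‖_∞ / 2))`, which dominates the minimum over `A*`.
-/

section Voronoi

variable {k : ℕ}

theorem voronoi_dist_set_eq_image_infDist {A : Finset (EuclideanSpace ℝ (Fin k))}
    (hA : A.Nonempty) (S : Set (EuclideanSpace ℝ (Fin k))) :
    {d | ∃ a ∈ A, ∃ x ∈ voronoi a A ∩ S, d = dist x a} = (infDist · (A : Set _)) '' S := by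
  ext d
  constructor
  · rintro ⟨a, -, x, ⟨hxa, hxS⟩, rfl⟩
    exact ⟨x, hxS, hxa.symm⟩
  · rintro ⟨x, hxS, rfl⟩
    obtain ⟨a, ha, hxa⟩ := A.finite_toSet.isCompact.exists_infDist_eq_dist hA x
    exact ⟨a, ha, x, ⟨hxa.symm, hxS⟩, hxa⟩

theorem exists_infDist_eq_sSup_voronoi_dist {A : Finset (EuclideanSpace ℝ (Fin k))}
    (hA : A.Nonempty) {S : Set (EuclideanSpace ℝ (Fin k))} (hS : IsCompact S)
    (hSne : S.Nonempty) :
    ∃ x ∈ S, infDist x A = sSup {d | ∃ a ∈ A, ∃ x ∈ voronoi a A ∩ S, d = dist x a} := by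
  rw [voronoi_dist_set_eq_image_infDist hA]
  exact (hS.image (continuous_infDist_pt _)).sSup_mem (hSne.image _)

end Voronoi

section MetricMeasure

variable {X : Type*} [PseudoMetricSpace X]

theorem infDist_sub_le_infDist_of_mem_closedBall {s : Set X} {x y : X} {ε : ℝ}
    (hy : y ∈ closedBall x ε) : infDist x s - ε ≤ infDist y s := by
  have := infDist_le_infDist_add_dist (s := s) (x := x) (y := y)
  rw [dist_comm] at this
  linarith [mem_closedBall.mp hy]

variable [MeasurableSpace X]

theorem Continuous.integrable_of_isCompact_of_measure_compl_eq_zero [OpensMeasurableSpace X]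
    [T2Space X] {μ : Measure X} [IsFiniteMeasure μ] {f : X → ℝ} (hf : Continuous f)
    {S : Set X} (hS : IsCompact S) (hμS : μ Sᶜ = 0) : Integrable f μ := by
  rw [← integrableOn_univ, IntegrableOn, ← Measure.restrict_congr_set (ae_eq_univ.mpr hμS)]
  exact hf.continuousOn.integrableOn_compact hS

theorem half_infDist_rpow_mul_measureReal_closedBall_le_integral (μ : Measure X)
    [IsFiniteMeasure μ] (s : Set X) {r : ℝ} (hr : 0 ≤ r)
    (hint : Integrable (fun y => infDist y s ^ r) μ) (x : X) :
    (infDist x s / 2) ^ r * μ.real (closedBall x (infDist x s / 2)) ≤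
      ∫ y, infDist y s ^ r ∂μ := by
  set ε := infDist x s / 2 with hε_def
  have hε : 0 ≤ ε := div_nonneg infDist_nonneg two_pos.le
  have hball : closedBall x ε ⊆ {y | ε ^ r ≤ infDist y s ^ r} := fun y hy => by
    have := infDist_sub_le_infDist_of_mem_closedBall (s := s) hy
    exact Real.rpow_le_rpow hε (by linarith) hr
  calc ε ^ r * μ.real (closedBall x ε)
      ≤ ε ^ r * μ.real {y | ε ^ r ≤ infDist y s ^ r} :=
        mul_le_mul_of_nonneg_left (measureReal_mono hball) (Real.rpow_nonneg hε r)
    _ ≤ ∫ y, infDist y s ^ r ∂μ :=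
        mul_meas_ge_le_integral_of_nonneg
          (.of_forall fun _ => Real.rpow_nonneg infDist_nonneg r) hint _

end MetricMeasure

theorem stmt6_general {k : ℕ} (μ : Measure (EuclideanSpace ℝ (Fin k)))
    [IsProbabilityMeasure μ] (r : ℝ) (hr : 0 < r)
    (Astar : Set (EuclideanSpace ℝ (Fin k)))
    (hAc : IsCompact Astar) (hAinf : Astar.Infinite)
    (hAfull : μ Astarᶜ = 0)
    (n : ℕ) (A : Finset (EuclideanSpace ℝ (Fin k))) (hA : A.Nonempty)
    (hopt : ∫ x, Metric.infDist x ↑A ^ r ∂μ = quantErr μ n r)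
    (hnorm : ℝ)
    (hhnorm : hnorm = sSup {d | ∃ a ∈ A, ∃ x ∈ voronoi a A ∩ Astar, d = dist x a}) :
    (hnorm / 2) ^ r *
        sInf ((fun x => (μ (Metric.closedBall x (hnorm / 2))).toReal) '' Astar) ≤
      quantErr μ n r := by
  obtain ⟨x₀, hx₀, hx₀A⟩ := exists_infDist_eq_sSup_voronoi_dist hA hAc hAinf.nonempty
  rw [← hhnorm] at hx₀A
  have hint : Integrable (fun y => infDist y (A : Set (EuclideanSpace ℝ (Fin k))) ^ r) μ :=
    ((continuous_infDist_pt _).rpow_const fun _ => Or.inr hr.le)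
      |>.integrable_of_isCompact_of_measure_compl_eq_zero hAc hAfull
  have hbound := half_infDist_rpow_mul_measureReal_closedBall_le_integral μ _ hr.le hint x₀
  rw [hx₀A, hopt] at hbound
  have hnorm_nonneg : 0 ≤ hnorm := hx₀A ▸ infDist_nonneg
  refine le_trans (mul_le_mul_of_nonneg_left ?_ (by positivity)) hbound
  exact csInf_le ⟨0, by rintro _ ⟨x, -, rfl⟩; exact ENNReal.toReal_nonneg⟩ ⟨x₀, hx₀, rfl⟩

theorem stmt6 {k : ℕ} (μ : Measure (EuclideanSpace ℝ (Fin k)))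
    [IsProbabilityMeasure μ] (r : ℝ) (hr : 0 < r)
    (Astar : Set (EuclideanSpace ℝ (Fin k)))
    (hAc : IsCompact Astar) (hAinf : Astar.Infinite)
    (hAfull : μ Astarᶜ = 0)
    (hAmin : ∀ F : Set (EuclideanSpace ℝ (Fin k)), IsClosed F → μ Fᶜ = 0 → Astar ⊆ F)
    (n : ℕ) (A : Finset (EuclideanSpace ℝ (Fin k))) (hA : A.Nonempty)
    (hcard : A.card ≤ n)
    (hopt : ∫ x, Metric.infDist x ↑A ^ r ∂μ = quantErr μ n r)
    (hnorm : ℝ)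
    (hhnorm : hnorm = sSup {d | ∃ a ∈ A, ∃ x ∈ voronoi a A ∩ Astar, d = dist x a}) :
    (hnorm / 2) ^ r *
        sInf ((fun x => (μ (Metric.closedBall x (hnorm / 2))).toReal) '' Astar) ≤
      quantErr μ n r :=
  stmt6_general μ r hr Astar hAc hAinf hAfull n A hA hopt hnorm hhnorm
end

section
/- Let Γ ⊂ Ω* be a finite maximal antichain for the recurrent IFS I = {X; f_{ij}, p_{ij}} and μ the associated invariant Borel probability measure on the limit set E, satisfying μ = Σ_{w∈Γ} p_w μ∘f_w^{-1}. Then for every n ∈ ℕ with n ≥ |Γ| and every choice of natural numbers n_w with Σ_{w∈Γ} n_w ≤ n, one has V_{n,r}(μ) ≤ Σ_{w∈Γ} p_w s_w^r V_{n_w,r}(μ). -/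
open scoped Classical
open MeasureTheory

/-!
Take near-optimal codebooks `A w` with `n w` points for `μ` and push them forward:
`B = ⋃ f w '' A w` has at most `n` points. The self-similarity `μ = ∑ p w • μ.map (f w)` splits
`∫ d(x, B)^r dμ` into `∑ p w ∫ d(f w y, B)^r dμ(y)`, and `d(f w y, B) ≤ s w * d(y, A w)` bounds
each term by `p w * s w ^ r * ∫ d(y, A w)^r dμ`. Letting the codebooks approach optimality gives
the claim.
-/

open Finset Metric NNReal

theorem LipschitzWith.infDist_image_le {α β : Type*} [PseudoMetricSpace α] [PseudoMetricSpace β]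
    {K : ℝ≥0} {f : α → β} (hf : LipschitzWith K f) (x : α) (s : Set α) :
    infDist (f x) (f '' s) ≤ K * infDist x s := by
  rcases s.eq_empty_or_nonempty with rfl | hs
  · simp
  have := hs.to_subtype
  rw [infDist_eq_iInf (x := x), Real.mul_iInf_of_nonneg K.coe_nonneg]
  exact le_ciInf fun y => (infDist_le_dist_of_mem (Set.mem_image_of_mem f y.2)).trans
    (hf.dist_le_mul x y)

theorem integrable_infDist_rpow_of_hausdorffEDist_ne_top {α : Type*} [PseudoMetricSpace α]
    [MeasurableSpace α] [OpensMeasurableSpace α] {μ : Measure α} [IsFiniteMeasure μ] {r : ℝ}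
    (hr : 0 < r) {s t : Set α} (hst : hausdorffEDist s t ≠ ⊤)
    (hs : Integrable (fun x => infDist x s ^ r) μ) :
    Integrable (fun x => infDist x t ^ r) μ := by
  have hmeas : ∀ u : Set α, AEStronglyMeasurable (fun x => infDist x u) μ := fun u =>
    (continuous_infDist_pt u).aestronglyMeasurable
  have hp0 : ENNReal.ofReal r ≠ 0 := by simpa using hr
  have key : ∀ u : Set α, Integrable (fun x => infDist x u ^ r) μ ↔
      MemLp (fun x => infDist x u) (ENNReal.ofReal r) μ := fun u => by
    rw [← integrable_norm_rpow_iff (hmeas u) hp0 ENNReal.ofReal_ne_top,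
      ENNReal.toReal_ofReal hr.le]
    simp only [Real.norm_of_nonneg infDist_nonneg]
  rw [key] at hs ⊢
  refine (hs.add (memLp_const (hausdorffDist s t))).mono (hmeas t) (ae_of_all _ fun x => ?_)
  rw [Pi.add_apply, Real.norm_of_nonneg infDist_nonneg,
    Real.norm_of_nonneg (add_nonneg infDist_nonneg hausdorffDist_nonneg)]
  exact infDist_le_infDist_add_hausdorffDist hst

theorem integral_eq_sum_smul_integral_comp_of_eq_sum_map {ι α E : Type*} [Fintype ι]
    [MeasurableSpace α] [NormedAddCommGroup E] [NormedSpace ℝ E] {μ : Measure α}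
    {f : ι → α → α} (hf : ∀ w, Measurable (f w)) {p : ι → ℝ} (hp : ∀ w, 0 ≤ p w)
    (hμ : μ = ∑ w, ENNReal.ofReal (p w) • μ.map (f w)) {g : α → E}
    (hg : StronglyMeasurable g) (hgi : Integrable g μ) :
    ∫ x, g x ∂μ = ∑ w, p w • ∫ x, g (f w x) ∂μ := by
  rw [hμ] at hgi
  conv_lhs => rw [hμ]
  rw [integral_finsetSum_measure fun w _ => integrable_finsetSum_measure.1 hgi w (by simp)]
  refine sum_congr rfl fun w _ => ?_
  rw [integral_smul_measure, ENNReal.toReal_ofReal (hp w),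
    integral_map (hf w).aemeasurable hg.aestronglyMeasurable]

theorem integral_infDist_rpow_biUnion_image_le {ι α : Type*} [Fintype ι] [DecidableEq α]
    [PseudoMetricSpace α] [MeasurableSpace α] [BorelSpace α] {μ : Measure α} [IsFiniteMeasure μ]
    {f : ι → α → α} {K : ι → ℝ≥0} (hf : ∀ w, LipschitzWith (K w) (f w)) {p : ι → ℝ}
    (hp : ∀ w, 0 ≤ p w) (hμ : μ = ∑ w, ENNReal.ofReal (p w) • μ.map (f w)) {r : ℝ} (hr : 0 < r)
    (A : ι → Finset α) (hA : ∀ w, (A w).Nonempty) :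
    ∫ x, infDist x ↑(univ.biUnion fun w => (A w).image (f w)) ^ r ∂μ ≤
      ∑ w, p w * K w ^ r * ∫ x, infDist x ↑(A w) ^ r ∂μ := by
  set B := univ.biUnion fun w => (A w).image (f w)
  have hsub : ∀ w, f w '' A w ⊆ B := fun w => by
    rw [← Finset.coe_image, coe_subset]
    exact subset_biUnion_of_mem (fun w => (A w).image (f w)) (mem_univ w)
  have hcontract : ∀ w y, infDist (f w y) B ^ r ≤ K w ^ r * infDist y (A w) ^ r := fun w y =>
    calc infDist (f w y) B ^ r ≤ (K w * infDist y (A w)) ^ r :=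
          Real.rpow_le_rpow infDist_nonneg ((infDist_le_infDist_of_subset (hsub w)
            ((hA w).to_set.image _)).trans ((hf w).infDist_image_le y _)) hr.le
      _ = K w ^ r * infDist y (A w) ^ r := Real.mul_rpow (K w).coe_nonneg infDist_nonneg
  by_cases hB : Integrable (fun x => infDist x B ^ r) μ
  swap
  · rw [integral_undef hB]
    exact sum_nonneg fun w _ => mul_nonneg (mul_nonneg (hp w) (by positivity))
      (integral_nonneg fun x => Real.rpow_nonneg infDist_nonneg r)
  have hAint : ∀ w, Integrable (fun x => infDist x (A w) ^ r) μ := fun w =>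
    integrable_infDist_rpow_of_hausdorffEDist_ne_top hr
      (hausdorffEDist_ne_top_of_nonempty_of_bounded (((hA w).to_set.image _).mono (hsub w))
        (hA w) B.finite_toSet.isBounded (A w).finite_toSet.isBounded) hB
  rw [integral_eq_sum_smul_integral_comp_of_eq_sum_map (fun w => (hf w).continuous.measurable) hp
    hμ ((continuous_infDist_pt _).rpow_const fun _ => Or.inr hr.le).stronglyMeasurable hB]
  refine sum_le_sum fun w _ => ?_
  rw [smul_eq_mul, mul_assoc, ← integral_const_mul ((K w : ℝ) ^ r)]
  exact mul_le_mul_of_nonneg_left (integral_mono_of_nonneg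
    (ae_of_all _ fun _ => Real.rpow_nonneg infDist_nonneg r) ((hAint w).const_mul _)
    (ae_of_all _ (hcontract w))) (hp w)

section QuantErr

variable {k : ℕ} (μ : Measure (EuclideanSpace ℝ (Fin k))) (r : ℝ) {n : ℕ}

theorem quantErr_le_integral {A : Finset (EuclideanSpace ℝ (Fin k))} (hA : A.Nonempty)
    (hn : A.card ≤ n) : quantErr μ n r ≤ ∫ x, infDist x ↑A ^ r ∂μ :=
  csInf_le ⟨0, by rintro v ⟨B, -, -, rfl⟩; exact integral_nonneg fun x =>
    Real.rpow_nonneg infDist_nonneg r⟩ ⟨A, hA, hn, rfl⟩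

theorem exists_integral_lt_quantErr_add (hn : 1 ≤ n) {δ : ℝ} (hδ : 0 < δ) :
    ∃ A : Finset (EuclideanSpace ℝ (Fin k)), A.Nonempty ∧ A.card ≤ n ∧
      ∫ x, infDist x ↑A ^ r ∂μ < quantErr μ n r + δ := by
  have hne : {v | ∃ A : Finset (EuclideanSpace ℝ (Fin k)), A.Nonempty ∧ A.card ≤ n ∧
      v = ∫ x, infDist x ↑A ^ r ∂μ}.Nonempty :=
    ⟨_, {0}, singleton_nonempty 0, by simpa using hn, rfl⟩
  obtain ⟨_, ⟨A, hA, hAn, rfl⟩, hlt⟩ := Real.lt_sInf_add_pos hne hδ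
  exact ⟨A, hA, hAn, hlt⟩

end QuantErr

theorem stmt10_general {k : ℕ} (μ : Measure (EuclideanSpace ℝ (Fin k)))
    [IsProbabilityMeasure μ] (r : ℝ) (hr : 0 < r)
    {ι : Type*} [Fintype ι] [Nonempty ι]
    (f : ι → EuclideanSpace ℝ (Fin k) → EuclideanSpace ℝ (Fin k))
    (pp ss : ι → ℝ)
    (hpp : ∀ w, 0 < pp w)
    (hss : ∀ w, 0 < ss w ∧ ss w < 1)
    (hLip : ∀ w x y, dist (f w x) (f w y) ≤ ss w * dist x y)
    (hinv : μ = ∑ w, (ENNReal.ofReal (pp w)) • μ.map (f w))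
    (n : ℕ)
    (nw : ι → ℕ) (hnw : ∀ w, 1 ≤ nw w) (hnwsum : ∑ w, nw w ≤ n) :
    quantErr μ n r ≤ ∑ w, pp w * ss w ^ r * quantErr μ (nw w) r := by
  have hss_coe : ∀ w, ((ss w).toNNReal : ℝ) = ss w := fun w =>
    Real.coe_toNNReal _ (hss w).1.le
  have hfLip : ∀ w, LipschitzWith (ss w).toNNReal (f w) := fun w =>
    LipschitzWith.of_dist_le_mul fun x y => (hss_coe w).symm ▸ hLip w x y
  set T := ∑ w, pp w * ss w ^ r
  have hT : 0 < T :=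
    sum_pos (fun w _ => mul_pos (hpp w) (Real.rpow_pos_of_pos (hss w).1 r)) univ_nonempty
  refine le_of_forall_pos_le_add fun ε hε => ?_
  choose A hA hAcard hAint using fun w =>
    exists_integral_lt_quantErr_add μ r (hnw w) (div_pos hε hT)
  set B := univ.biUnion fun w => (A w).image (f w)
  have hB : B.Nonempty := univ_nonempty.biUnion fun w _ => (hA w).image (f w)
  have hBcard : B.card ≤ n :=
    card_biUnion_le.trans <| (sum_le_sum fun w _ => card_image_le.trans (hAcard w)).trans hnwsum
  calc quantErr μ n r ≤ ∫ x, infDist x ↑B ^ r ∂μ := quantErr_le_integral μ r hB hBcard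
    _ ≤ ∑ w, pp w * ss w ^ r * ∫ x, infDist x ↑(A w) ^ r ∂μ := by
      simpa only [hss_coe] using integral_infDist_rpow_biUnion_image_le hfLip
        (fun w => (hpp w).le) hinv hr A hA
    _ ≤ ∑ w, pp w * ss w ^ r * (quantErr μ (nw w) r + ε / T) := by
      gcongr with w
      · exact mul_nonneg (hpp w).le (Real.rpow_nonneg (hss w).1.le r)
      · exact (hAint w).le
    _ = ∑ w, pp w * ss w ^ r * quantErr μ (nw w) r + ε := by
      simp only [mul_add, sum_add_distrib, ← sum_mul]
      exact congrArg _ (mul_div_cancel₀ ε hT.ne')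

/-- if `μ = Σ_{w∈Γ} p_w μ∘f_w⁻¹` over a finite maximal antichain `Γ`
(abstracted as a finite index type), with `f_w` having upper Lipschitz constant
`s_w`, then for `n ≥ |Γ|` and any `n_w ∈ ℕ` with `Σ n_w ≤ n`,
`V_{n,r}(μ) ≤ Σ_w p_w s_w^r V_{n_w,r}(μ)`. -/
theorem stmt10 {k : ℕ} (μ : Measure (EuclideanSpace ℝ (Fin k)))
    [IsProbabilityMeasure μ] (r : ℝ) (hr : 0 < r)
    {ι : Type*} [Fintype ι] [Nonempty ι]
    (f : ι → EuclideanSpace ℝ (Fin k) → EuclideanSpace ℝ (Fin k))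
    (pp ss : ι → ℝ)
    (hpp : ∀ w, 0 < pp w) (hpsum : ∑ w, pp w = 1)
    (hss : ∀ w, 0 < ss w ∧ ss w < 1)
    (hLip : ∀ w x y, dist (f w x) (f w y) ≤ ss w * dist x y)
    (hinv : μ = ∑ w, (ENNReal.ofReal (pp w)) • μ.map (f w))
    (n : ℕ) (hn : Fintype.card ι ≤ n)
    (nw : ι → ℕ) (hnw : ∀ w, 1 ≤ nw w) (hnwsum : ∑ w, nw w ≤ n) :
    quantErr μ n r ≤ ∑ w, pp w * ss w ^ r * quantErr μ (nw w) r :=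
  stmt10_general μ r hr f pp ss hpp hss hLip hinv n nw hnw hnwsum
end

section
/- Let c_w ∈ (0,1) and p_w ∈ (0,1) for w in a finite index set Ω_m with Σ_{w} p_w = 1, and let l ∈ (0,∞) satisfy Σ_w (p_w c_w^r)^{l/(r+l)} > 1. Suppose V: ℕ → (0,∞) satisfies: there is n_0 such that for all n ≥ n_0 there are n_w ∈ ℕ with Σ_w n_w ≤ n and V(n) ≥ Σ_w p_w c_w^r V(n_w). If K_0 = inf{n^{r/l} V(n) : n < n_0} > 0, then n^{r/l} V(n) ≥ K_0 for all n ∈ ℕ. (Key step: by Hölder's inequality with negative exponents, Σ_w p_w c_w^r (n_w/n)^{-r/l} ≥ (Σ_w (p_w c_w^r)^{l/(r+l)})^{(l+r)/l} (Σ_w n_w/n)^{-r/l} ≥ 1.) -/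
open Finset

/-!
Strong induction on `n`, with `t = r / l` and `a_w = p_w c_w ^ r`. Since every `a_w < 1`, the
hypothesis `∑ a_w ^ (1 + t)⁻¹ > 1` forces at least two indices, so for `n ≥ n₀` every piece `n_w`
is smaller than `n`. A reverse Hölder inequality gives
`∑ a_w n_w ^ (-t) ≥ (∑ a_w ^ (1 + t)⁻¹) ^ (1 + t) (∑ n_w) ^ (-t) ≥ n ^ (-t)`,
which carries the bound `V m ≥ K₀ m ^ (-t)` from the pieces to `n`.
-/

theorem Real.rpow_sum_rpow_le_sum_mul_rpow_neg_mul_rpow_sum {ι : Type*} (s : Finset ι)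
    {t : ℝ} (ht : 0 < t) {a x : ι → ℝ} (ha : ∀ w ∈ s, 0 ≤ a w) (hx : ∀ w ∈ s, 0 < x w) :
    (∑ w ∈ s, a w ^ (1 + t)⁻¹) ^ (1 + t) ≤ (∑ w ∈ s, a w * x w ^ (-t)) * (∑ w ∈ s, x w) ^ t := by
  -- Hölder for `a x^(-t)` and `x^t` with exponents `1`, `1/t`, `1/(1+t)`.
  have htriple : Real.HolderTriple 1 t⁻¹ (1 + t)⁻¹ :=
    ⟨by simp, one_pos, inv_pos.mpr ht⟩
  have holder := Real.Lr_rpow_le_Lp_mul_Lq_of_nonneg s htriple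
    (f := fun w => a w * x w ^ (-t)) (g := fun w => x w ^ t)
    (fun w hw => mul_nonneg (ha w hw) (Real.rpow_nonneg (hx w hw).le _))
    (fun w hw => Real.rpow_nonneg (hx w hw).le _)
  have hcancel : ∀ w ∈ s, a w * x w ^ (-t) * x w ^ t = a w := fun w hw => by
    rw [mul_assoc, ← Real.rpow_add (hx w hw), neg_add_cancel, Real.rpow_zero, mul_one]
  have hpow : ∀ w ∈ s, (x w ^ t) ^ t⁻¹ = x w := fun w hw => by
    rw [← Real.rpow_mul (hx w hw).le, mul_inv_cancel₀ ht.ne', Real.rpow_one]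
  rw [sum_congr rfl fun w hw => by rw [hcancel w hw], sum_congr rfl hpow, div_one] at holder
  simp only [Real.rpow_one] at holder
  have h1t : 0 < 1 + t := by linarith
  have hA : 0 ≤ ∑ w ∈ s, a w * x w ^ (-t) :=
    sum_nonneg fun w hw => mul_nonneg (ha w hw) (Real.rpow_nonneg (hx w hw).le _)
  have hX : 0 ≤ ∑ w ∈ s, x w := sum_nonneg fun w hw => (hx w hw).le
  calc (∑ w ∈ s, a w ^ (1 + t)⁻¹) ^ (1 + t)
      ≤ ((∑ w ∈ s, a w * x w ^ (-t)) ^ (1 + t)⁻¹ * (∑ w ∈ s, x w) ^ ((1 + t)⁻¹ / t⁻¹)) ^ (1 + t) :=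
        Real.rpow_le_rpow (sum_nonneg fun w hw => Real.rpow_nonneg (ha w hw) _) holder h1t.le
    _ = (∑ w ∈ s, a w * x w ^ (-t)) * (∑ w ∈ s, x w) ^ t := by
        rw [Real.mul_rpow (Real.rpow_nonneg hA _) (Real.rpow_nonneg hX _), ← Real.rpow_mul hA,
          ← Real.rpow_mul hX, inv_mul_cancel₀ h1t.ne', Real.rpow_one]
        congr 2
        field_simp

theorem Real.rpow_neg_le_sum_mul_rpow_neg {ι : Type*} (s : Finset ι) {t : ℝ} (ht : 0 < t)
    {a x : ι → ℝ} (ha : ∀ w ∈ s, 0 ≤ a w) (hx : ∀ w ∈ s, 0 < x w)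
    (hsum : 1 ≤ ∑ w ∈ s, a w ^ (1 + t)⁻¹) {y : ℝ} (hy : 0 < y) (hxy : ∑ w ∈ s, x w ≤ y) :
    y ^ (-t) ≤ ∑ w ∈ s, a w * x w ^ (-t) := by
  have hA : 0 ≤ ∑ w ∈ s, a w * x w ^ (-t) :=
    sum_nonneg fun w hw => mul_nonneg (ha w hw) (Real.rpow_nonneg (hx w hw).le _)
  have hone : 1 ≤ (∑ w ∈ s, a w * x w ^ (-t)) * y ^ t :=
    calc 1 ≤ (∑ w ∈ s, a w ^ (1 + t)⁻¹) ^ (1 + t) := Real.one_le_rpow hsum (by linarith)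
      _ ≤ (∑ w ∈ s, a w * x w ^ (-t)) * (∑ w ∈ s, x w) ^ t :=
        Real.rpow_sum_rpow_le_sum_mul_rpow_neg_mul_rpow_sum s ht ha hx
      _ ≤ (∑ w ∈ s, a w * x w ^ (-t)) * y ^ t := by
        gcongr
        exact sum_nonneg fun w hw => (hx w hw).le
  rw [Real.rpow_neg hy.le]
  exact (inv_le_iff_one_le_mul₀ (Real.rpow_pos_of_pos hy t)).mpr hone

theorem le_rpow_mul_of_recursive_lower_bound {ι : Type*} [Fintype ι]
    (hcard : 1 < Fintype.card ι) {t : ℝ} (ht : 0 < t) {a : ι → ℝ} (ha : ∀ w, 0 ≤ a w)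
    (hsum : 1 ≤ ∑ w, a w ^ (1 + t)⁻¹) {V : ℕ → ℝ} {n₀ : ℕ}
    (hrec : ∀ n : ℕ, n₀ ≤ n → ∃ nw : ι → ℕ, (∀ w, 1 ≤ nw w) ∧
      (∑ w, nw w) ≤ n ∧ ∑ w, a w * V (nw w) ≤ V n)
    {K : ℝ} (hK : 0 ≤ K) (hbase : ∀ n : ℕ, 1 ≤ n → n < n₀ → K ≤ (n : ℝ) ^ t * V n) :
    ∀ n : ℕ, 1 ≤ n → K ≤ (n : ℝ) ^ t * V n := by
  have hscale : ∀ n : ℕ, 1 ≤ n → (K ≤ (n : ℝ) ^ t * V n ↔ K * (n : ℝ) ^ (-t) ≤ V n) :=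
    fun n hn => by
      have hn' : (0 : ℝ) < n := by exact_mod_cast hn
      rw [Real.rpow_neg hn'.le, mul_inv_le_iff₀ (by positivity), mul_comm]
  intro n
  induction n using Nat.strong_induction_on with
  | _ n ih =>
  intro hn
  rcases lt_or_ge n n₀ with hlt | hge
  · exact hbase n hn hlt
  obtain ⟨nw, hnw, hnw_sum, hnw_rec⟩ := hrec n hge
  have hnw_lt : ∀ w, nw w < n := fun w => by
    obtain ⟨v, hv⟩ := Fintype.exists_ne_of_one_lt_card hcard w
    exact (single_lt_sum hv (mem_univ w) (mem_univ v) (hnw v) fun k _ _ => Nat.zero_le _).trans_le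
      hnw_sum
  have hsub : ∀ w, K * (nw w : ℝ) ^ (-t) ≤ V (nw w) := fun w =>
    (hscale _ (hnw w)).mp (ih _ (hnw_lt w) (hnw w))
  have hhold : (n : ℝ) ^ (-t) ≤ ∑ w, a w * (nw w : ℝ) ^ (-t) :=
    Real.rpow_neg_le_sum_mul_rpow_neg univ ht (fun w _ => ha w)
      (fun w _ => by exact_mod_cast hnw w) hsum (by exact_mod_cast hn) (by exact_mod_cast hnw_sum)
  rw [hscale n hn]
  calc K * (n : ℝ) ^ (-t) ≤ K * ∑ w, a w * (nw w : ℝ) ^ (-t) := by gcongr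
    _ = ∑ w, a w * (K * (nw w : ℝ) ^ (-t)) := by
      rw [mul_sum]
      exact sum_congr rfl fun w _ => by ring
    _ ≤ ∑ w, a w * V (nw w) :=
      sum_le_sum fun w _ => mul_le_mul_of_nonneg_left (hsub w) (ha w)
    _ ≤ V n := hnw_rec

theorem stmt15_general {ι : Type*} [Fintype ι]
    (r l : ℝ) (hr : 0 < r) (hl : 0 < l)
    (p c : ι → ℝ) (hp : ∀ w, 0 < p w ∧ p w < 1) (hc : ∀ w, 0 < c w ∧ c w < 1)
    (hgt : 1 < ∑ w, (p w * c w ^ r) ^ (l / (r + l)))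
    (V : ℕ → ℝ) (hV : ∀ n, 0 < V n)
    (n₀ : ℕ)
    (hrec : ∀ n : ℕ, n₀ ≤ n → ∃ nw : ι → ℕ, (∀ w, 1 ≤ nw w) ∧
      (∑ w, nw w) ≤ n ∧ ∑ w, p w * c w ^ r * V (nw w) ≤ V n)
    (K₀ : ℝ)
    (hK₀ : K₀ = sInf {x | ∃ n : ℕ, 1 ≤ n ∧ n < n₀ ∧ x = (n : ℝ) ^ (r / l) * V n})
    (hK₀pos : 0 < K₀) :
    ∀ n : ℕ, 1 ≤ n → K₀ ≤ (n : ℝ) ^ (r / l) * V n := by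
  have hexp : l / (r + l) = (1 + r / l)⁻¹ := by field_simp; ring
  rw [hexp] at hgt
  have ha : ∀ w, 0 ≤ p w * c w ^ r := fun w =>
    mul_nonneg (hp w).1.le (Real.rpow_nonneg (hc w).1.le _)
  have ha_le : ∀ w, (p w * c w ^ r) ^ (1 + r / l)⁻¹ ≤ 1 := fun w =>
    Real.rpow_le_one (ha w)
      (mul_le_one₀ (hp w).2.le (Real.rpow_nonneg (hc w).1.le _)
        (Real.rpow_le_one (hc w).1.le (hc w).2.le hr.le)) (by positivity)
  have hcard : 1 < Fintype.card ι := by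
    have := hgt.trans_le (sum_le_card_nsmul univ _ 1 fun w _ => ha_le w)
    exact_mod_cast (by simpa using this : (1 : ℝ) < Fintype.card ι)
  refine le_rpow_mul_of_recursive_lower_bound hcard (div_pos hr hl) ha hgt.le hrec hK₀pos.le ?_
  intro n hn hlt
  rw [hK₀]
  refine csInf_le ⟨0, ?_⟩ ⟨n, hn, hlt, rfl⟩
  rintro x ⟨m, -, -, rfl⟩
  exact mul_nonneg (Real.rpow_nonneg m.cast_nonneg _) (hV m).le

theorem stmt15 {ι : Type*} [Fintype ι] [Nonempty ι]
    (r l : ℝ) (hr : 0 < r) (hl : 0 < l)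
    (p c : ι → ℝ) (hp : ∀ w, 0 < p w ∧ p w < 1) (hc : ∀ w, 0 < c w ∧ c w < 1)
    (hpsum : ∑ w, p w = 1)
    (hgt : 1 < ∑ w, (p w * c w ^ r) ^ (l / (r + l)))
    (V : ℕ → ℝ) (hV : ∀ n, 0 < V n)
    (n₀ : ℕ)
    (hrec : ∀ n : ℕ, n₀ ≤ n → ∃ nw : ι → ℕ, (∀ w, 1 ≤ nw w) ∧
      (∑ w, nw w) ≤ n ∧ ∑ w, p w * c w ^ r * V (nw w) ≤ V n)
    (K₀ : ℝ)
    (hK₀ : K₀ = sInf {x | ∃ n : ℕ, 1 ≤ n ∧ n < n₀ ∧ x = (n : ℝ) ^ (r / l) * V n})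
    (hK₀pos : 0 < K₀) :
    ∀ n : ℕ, 1 ≤ n → K₀ ≤ (n : ℝ) ^ (r / l) * V n :=
  stmt15_general r l hr hl p c hp hc hgt V hV n₀ hrec K₀ hK₀ hK₀pos
end

section
/- Let I = {X; f_{ij}, p_{ij}} be a bi-Lipschitz recurrent IFS satisfying the strong open set condition with open sets U_1,…,U_N. Then for each m ∈ ℕ there exists a recurrent IFS I^m = {X; g_w : w ∈ Ω_m} satisfying the strong separation condition, where g_w = f_w ∘ f_{σ^i} for w = (w_1,…,w_{m-1},i) ∈ Ω_m and suitable loops σ^i ∈ Ω* starting and ending at i with f_{σ^i}(E_i) ⊆ U_i; in particular, for distinct words w ≠ τ in Ω_m, the sets g_w(F^m_{w_m}) and g_τ(F^m_{τ_m}) are disjoint, and the limit set F^m of I^m is contained in E. -/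
/-!
Under the strong open set condition, two distinct admissible words of positive length have
disjoint images `f_w (U_{w_m})`: at the first step where they differ the open sets separate them,
and injectivity carries this back through the common prefix. A loop `σ^i` is built by following
a word from `i` whose cylinder `f_w (E)` is so small that it lies in a ball around a point of
`E_i ∩ U_i` contained in `U_i`, and then returning to `i` by irreducibility; hence
`g_w (E) ⊆ f_w (U)`. The limit sets of `I^m` are the intersections of the decreasing compact
iterates, starting from `E`, of its Hutchinson operator, which commutes with these intersections
because its maps are injective and finitely many.
-/

open scoped Classical BigOperators

def Adm {N : ℕ} (p : Fin N → Fin N → ℝ) {m : ℕ} (w : Fin (m + 1) → Fin N) : Prop :=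
  ∀ i : Fin m, 0 < p (w i.castSucc) (w i.succ)

def fWord {N : ℕ} {V : Type*} (f : Fin N → Fin N → V → V) {m : ℕ}
    (w : Fin (m + 1) → Fin N) : V → V :=
  fun x => (List.ofFn (fun i : Fin m => f (w i.castSucc) (w i.succ))).foldr
    (fun g y => g y) x

open Set Filter Function Topology
open scoped NNReal

section Hutchinson

variable {ι α X : Type*} (S : ι → Finset α) (t : α → ι) (g : α → X → X)

def hutchinson (A : ι → Set X) (i : ι) : Set X :=
  ⋃ a ∈ S i, g a '' A (t a)

theorem monotone_hutchinson : Monotone (hutchinson S t g) :=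
  fun _ _ hAB _ => iUnion₂_mono fun a _ => image_mono (hAB (t a))

theorem hutchinson_nonempty {A : ι → Set X} (hA : ∀ i, (A i).Nonempty) (hS : ∀ i, (S i).Nonempty)
    (i : ι) : (hutchinson S t g A i).Nonempty :=
  let ⟨a, ha⟩ := hS i
  ((hA (t a)).image (g a)).mono (subset_biUnion_of_mem (u := fun a => g a '' A (t a)) ha)

theorem hutchinson_iInter {T : ℕ → ι → Set X} (hT : ∀ i, Antitone fun n => T n i)
    (hg : ∀ i, ∀ a ∈ S i, Injective (g a)) :
    hutchinson S t g (fun i => ⋂ n, T n i) = fun i => ⋂ n, hutchinson S t g (T n) i := by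
  funext i
  calc ⋃ a ∈ S i, g a '' ⋂ n, T n (t a)
      = ⋃ a ∈ S i, ⋂ n, g a '' T n (t a) :=
        iUnion₂_congr fun a ha => (hg i a ha).injOn.image_iInter_eq
    _ = ⋂ n, ⋃ a ∈ S i, g a '' T n (t a) := by
        simp only [← Finset.mem_coe, biUnion_eq_iUnion]
        exact (iInter_iUnion_of_antitone (ι := (S i : Set α))
          (s := fun a n => g a '' T n (t a)) fun a _ _ h => image_mono (hT _ h)).symm

variable [TopologicalSpace X]

theorem isCompact_hutchinson {A : ι → Set X} (hA : ∀ i, IsCompact (A i))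
    (hg : ∀ i, ∀ a ∈ S i, Continuous (g a)) (i : ι) : IsCompact (hutchinson S t g A i) :=
  (S i).isCompact_biUnion fun a ha => (hA _).image (hg i a ha)

theorem exists_hutchinson_eq [T2Space X] {A : ι → Set X} (hAc : ∀ i, IsCompact (A i))
    (hAne : ∀ i, (A i).Nonempty) (hSne : ∀ i, (S i).Nonempty)
    (hcont : ∀ i, ∀ a ∈ S i, Continuous (g a)) (hinj : ∀ i, ∀ a ∈ S i, Injective (g a))
    (hA : hutchinson S t g A ≤ A) :
    ∃ F ≤ A, (∀ i, IsCompact (F i)) ∧ (∀ i, (F i).Nonempty) ∧ hutchinson S t g F = F := by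
  set T : ℕ → ι → Set X := fun n => (hutchinson S t g)^[n] A
  have hT_succ (n : ℕ) : T (n + 1) = hutchinson S t g (T n) := iterate_succ_apply' _ _ _
  have hT_anti (i : ι) : Antitone fun n => T n i := fun _ _ h =>
    (monotone_hutchinson S t g).antitone_iterate_of_map_le hA h i
  have hTc (n : ℕ) : ∀ i, IsCompact (T n i) := by
    induction n with
    | zero => exact hAc
    | succ n ih => rw [hT_succ]; exact isCompact_hutchinson S t g ih hcont
  have hTne (n : ℕ) : ∀ i, (T n i).Nonempty := by
    induction n with
    | zero => exact hAne
    | succ n ih => rw [hT_succ]; exact hutchinson_nonempty S t g ih hSne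
  refine ⟨fun i => ⋂ n, T n i, fun i => iInter_subset (fun n => T n i) 0, fun i => ?_,
    fun i => ?_, ?_⟩
  · exact (hTc 0 i).of_isClosed_subset (isClosed_iInter fun n => (hTc n i).isClosed)
      (iInter_subset _ 0)
  · exact IsCompact.nonempty_iInter_of_sequence_nonempty_isCompact_isClosed _
      (fun n => hT_anti i n.le_succ) (fun n => hTne n i) (hTc 0 i) fun n => (hTc n i).isClosed
  · rw [hutchinson_iInter S t g hT_anti hinj]
    funext i
    simp only [← hT_succ]
    exact (hT_anti i).iInter_nat_add 1

end Hutchinson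

theorem exists_lipschitzWith_lt_one {ι X : Type*} [Fintype ι] [PseudoEMetricSpace X]
    {P : ι → Prop} {g : ι → X → X} (h : ∀ i, P i → ∃ K < 1, LipschitzWith K (g i)) :
    ∃ K < 1, ∀ i, P i → LipschitzWith K (g i) := by
  choose! K hK1 hK using h
  refine ⟨(Finset.univ.filter P).sup K, ?_, fun i hi => (hK i hi).weaken ?_⟩
  · exact (Finset.sup_lt_iff (by simp)).2 fun i hi => hK1 i (Finset.mem_filter.1 hi).2
  · exact Finset.le_sup (Finset.mem_filter.2 ⟨Finset.mem_univ i, hi⟩)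

section Words

variable {N : ℕ} {p : Fin N → Fin N → ℝ} {X : Type*} (f : Fin N → Fin N → X → X)

theorem fWord_zero (w : Fin 1 → Fin N) : fWord f w = id := by
  funext x
  simp [fWord]

theorem fWord_succ {m : ℕ} (w : Fin (m + 2) → Fin N) :
    fWord f w = f (w 0) (w 1) ∘ fWord f (Fin.tail w) := by
  funext x
  simp [fWord, List.ofFn_succ, Fin.tail]

theorem fWord_cons {n : ℕ} (i : Fin N) (v : Fin (n + 1) → Fin N) :
    fWord f (Fin.cons i v) = f i (v 0) ∘ fWord f v := by
  rw [fWord_succ, Fin.tail_cons]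
  rfl

theorem Adm.pos_zero_one {m : ℕ} {w : Fin (m + 2) → Fin N} (hw : Adm p w) : 0 < p (w 0) (w 1) :=
  hw 0

theorem Adm.tail {m : ℕ} {w : Fin (m + 2) → Fin N} (hw : Adm p w) : Adm p (Fin.tail w) :=
  fun i => by simpa [Fin.tail] using hw i.succ

theorem Adm.cons {n : ℕ} {v : Fin (n + 1) → Fin N} (hv : Adm p v) {i : Fin N}
    (hi : 0 < p i (v 0)) : Adm p (Fin.cons i v : Fin (n + 2) → Fin N) := by
  intro k
  induction k using Fin.cases with
  | zero => simpa using hi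
  | succ k => simpa using hv k

theorem Adm.image_fWord_subset (A : Fin N → Set X) (hA : ∀ i j, 0 < p i j → f i j '' A j ⊆ A i)
    {m : ℕ} {w : Fin (m + 1) → Fin N} (hw : Adm p w) :
    fWord f w '' A (w (Fin.last m)) ⊆ A (w 0) := by
  induction m with
  | zero => simp [fWord_zero]
  | succ m ih =>
    rw [fWord_succ, image_comp]
    exact (image_mono (by simpa [Fin.tail, Fin.succ_last] using ih hw.tail)).trans
      (hA _ _ hw.pos_zero_one)

theorem Adm.injective_fWord (hf : ∀ i j, 0 < p i j → Injective (f i j))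
    {m : ℕ} {w : Fin (m + 1) → Fin N} (hw : Adm p w) : Injective (fWord f w) := by
  induction m with
  | zero => simpa [fWord_zero] using injective_id
  | succ m ih =>
    rw [fWord_succ]
    exact (hf _ _ hw.pos_zero_one).comp (ih hw.tail)

theorem Adm.continuous_fWord [TopologicalSpace X] (hf : ∀ i j, 0 < p i j → Continuous (f i j))
    {m : ℕ} {w : Fin (m + 1) → Fin N} (hw : Adm p w) : Continuous (fWord f w) := by
  induction m with
  | zero => simpa [fWord_zero] using continuous_id
  | succ m ih =>
    rw [fWord_succ]
    exact (hf _ _ hw.pos_zero_one).comp (ih hw.tail)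

theorem Adm.lipschitzWith_fWord [PseudoEMetricSpace X] {K : ℝ≥0}
    (hf : ∀ i j, 0 < p i j → LipschitzWith K (f i j))
    {m : ℕ} {w : Fin (m + 1) → Fin N} (hw : Adm p w) : LipschitzWith (K ^ m) (fWord f w) := by
  induction m with
  | zero => simpa [fWord_zero] using LipschitzWith.id
  | succ m ih =>
    rw [fWord_succ, pow_succ']
    exact (hf _ _ hw.pos_zero_one).comp (ih hw.tail)

-- The length is written `b + a` so that prepending a letter to `u` gives the length
-- `b + (a + 1) + 1` definitionally.
theorem Adm.exists_append {a b : ℕ} {w : Fin (a + 1) → Fin N} {v : Fin (b + 1) → Fin N}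
    (hw : Adm p w) (hv : Adm p v) (h : w (Fin.last a) = v 0) :
    ∃ u : Fin (b + a + 1) → Fin N, Adm p u ∧ u 0 = w 0 ∧ u (Fin.last (b + a)) = v (Fin.last b) ∧
      fWord f u = fWord f w ∘ fWord f v := by
  induction a with
  | zero => exact ⟨v, hv, h.symm, rfl, by rw [fWord_zero]; rfl⟩
  | succ a ih =>
    obtain ⟨u, hu, hu0, hul, hfu⟩ := ih hw.tail (by simpa [Fin.tail, Fin.succ_last] using h)
    refine ⟨Fin.cons (w 0) u, hu.cons (hu0 ▸ hw.pos_zero_one), rfl,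
      (Fin.cons_last _ _).trans hul, ?_⟩
    rw [fWord_cons, hfu, fWord_succ f w, hu0]
    rfl

theorem exists_adm_mem_image_fWord (E : Fin N → Set X)
    (hE : ∀ i, E i ⊆ ⋃ j, ⋃ (_ : 0 < p i j), f i j '' E j) (n : ℕ) {i : Fin N} {x : X}
    (hx : x ∈ E i) :
    ∃ w : Fin (n + 1) → Fin N, Adm p w ∧ w 0 = i ∧ x ∈ fWord f w '' E (w (Fin.last n)) := by
  induction n generalizing i x with
  | zero => exact ⟨fun _ => i, fun k => k.elim0, rfl, by simpa [fWord_zero] using hx⟩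
  | succ n ih =>
    obtain ⟨j, hj, y, hy, rfl⟩ : ∃ j, 0 < p i j ∧ x ∈ f i j '' E j := by simpa using hE i hx
    obtain ⟨v, hv, rfl, hyv⟩ := ih hy
    refine ⟨Fin.cons i v, hv.cons hj, rfl, ?_⟩
    rw [fWord_cons, image_comp, Fin.cons_last]
    exact mem_image_of_mem _ hyv

theorem exists_adm_of_pow_pos (hp : ∀ i j, 0 ≤ p i j) {n : ℕ} {i j : Fin N}
    (h : 0 < (Matrix.of p ^ n) i j) :
    ∃ w : Fin (n + 1) → Fin N, Adm p w ∧ w 0 = i ∧ w (Fin.last n) = j := by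
  induction n generalizing i with
  | zero =>
    obtain rfl : i = j := by
      by_contra hij
      simp [hij] at h
    exact ⟨fun _ => i, fun k => k.elim0, rfl, rfl⟩
  | succ n ih =>
    rw [pow_succ', Matrix.mul_apply] at h
    obtain ⟨k, -, hk⟩ := Finset.exists_lt_of_sum_lt (f := fun _ => (0 : ℝ)) (by simpa using h)
    obtain ⟨hik, hkj⟩ := (pos_and_pos_or_neg_and_neg_of_mul_pos hk).resolve_right
      fun h => (hp i k).not_gt h.1
    obtain ⟨v, hv, rfl, hvl⟩ := ih hkj
    exact ⟨Fin.cons i v, hv.cons hik, rfl, by simpa using hvl⟩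

theorem Adm.disjoint_image_fWord (U : Fin N → Set X)
    (hU : ∀ i j k l, 0 < p i j → 0 < p k l → (i, j) ≠ (k, l) →
      Disjoint (f i j '' U j) (f k l '' U l))
    (hUmaps : ∀ i j, 0 < p i j → f i j '' U j ⊆ U i) (hf : ∀ i j, 0 < p i j → Injective (f i j))
    {m : ℕ} {w τ : Fin (m + 2) → Fin N} (hw : Adm p w) (hτ : Adm p τ) (hne : w ≠ τ) :
    Disjoint (fWord f w '' U (w (Fin.last _))) (fWord f τ '' U (τ (Fin.last _))) := by
  rw [fWord_succ, fWord_succ, image_comp, image_comp]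
  by_cases hfirst : (w 0, w 1) = (τ 0, τ 1)
  · obtain ⟨h0, h1⟩ : w 0 = τ 0 ∧ w 1 = τ 1 := Prod.ext_iff.1 hfirst
    have htail : Fin.tail w ≠ Fin.tail τ := fun h => hne <| by
      rw [← Fin.cons_self_tail w, ← Fin.cons_self_tail τ, h0, h]
    rw [h0, h1, disjoint_image_iff (hf _ _ hτ.pos_zero_one)]
    cases m with
    | zero => exact absurd (funext fun k => by fin_cases k; exact h1) htail
    | succ m =>
      simpa [Fin.tail, Fin.succ_last] using
        hw.tail.disjoint_image_fWord U hU hUmaps hf hτ.tail htail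
  · have hsub {v : Fin (m + 2) → Fin N} (hv : Adm p v) :
        fWord f (Fin.tail v) '' U (v (Fin.last _)) ⊆ U (v 1) := by
      simpa [Fin.tail, Fin.succ_last] using hv.tail.image_fWord_subset f U hUmaps
    exact (hU _ _ _ _ hw.pos_zero_one hτ.pos_zero_one hfirst).mono (image_mono (hsub hw))
      (image_mono (hsub hτ))

theorem exists_hutchinson_fWord_loop_eq [TopologicalSpace X] [T2Space X]
    (hf : ∀ i j, 0 < p i j → Continuous (f i j)) (hinj : ∀ i j, 0 < p i j → Injective (f i j))
    {E : Fin N → Set X} (hEc : ∀ i, IsCompact (E i)) (hEne : ∀ i, (E i).Nonempty)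
    (hE : ∀ i, E i ⊆ ⋃ j, ⋃ (_ : 0 < p i j), f i j '' E j)
    (hEmaps : ∀ i j, 0 < p i j → f i j '' E j ⊆ E i) {L : Fin N → ℕ}
    {σ : (i : Fin N) → Fin (L i + 1) → Fin N} (hσ : ∀ i, Adm p (σ i))
    (hσE : ∀ i, fWord f (σ i) '' E i ⊆ E i) (m : ℕ) :
    ∃ F ≤ E, (∀ i, IsCompact (F i)) ∧ (∀ i, (F i).Nonempty) ∧
      hutchinson (fun i => Finset.univ.filter fun w : Fin (m + 1) → Fin N => Adm p w ∧ w 0 = i)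
        (fun w => w (Fin.last m)) (fun w => fWord f w ∘ fWord f (σ (w (Fin.last m)))) F = F := by
  have hS {i : Fin N} {w : Fin (m + 1) → Fin N}
      (hw : w ∈ Finset.univ.filter fun w : Fin (m + 1) → Fin N => Adm p w ∧ w 0 = i) :
      Adm p w ∧ w 0 = i := by
    simpa using hw
  refine exists_hutchinson_eq _ _ _ hEc hEne (fun i => ?_)
    (fun _ _ hw => ((hS hw).1.continuous_fWord f hf).comp ((hσ _).continuous_fWord f hf))
    (fun _ _ hw => ((hS hw).1.injective_fWord f hinj).comp ((hσ _).injective_fWord f hinj))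
    (fun _ => iUnion₂_subset fun w hw => ?_)
  · obtain ⟨w, hw, hw0, -⟩ := exists_adm_mem_image_fWord f E hE m (hEne i).some_mem
    exact ⟨w, by simp [hw, hw0]⟩
  · rw [image_comp, ← (hS hw).2]
    exact (image_mono (hσE _)).trans ((hS hw).1.image_fWord_subset f E hEmaps)

theorem exists_adm_loop_image_subset [PseudoMetricSpace X] {K : ℝ≥0} (hK : K < 1)
    (hf : ∀ i j, 0 < p i j → LipschitzWith K (f i j)) (hp : ∀ i j, 0 ≤ p i j)
    (hirr : ∀ i j, ∃ n, 0 < (Matrix.of p ^ n) i j) {E : Fin N → Set X}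
    (hEb : ∀ i, Bornology.IsBounded (E i)) (hE : ∀ i, E i ⊆ ⋃ j, ⋃ (_ : 0 < p i j), f i j '' E j)
    (hEmaps : ∀ i j, 0 < p i j → f i j '' E j ⊆ E i) {i : Fin N} {V : Set X} (hV : IsOpen V)
    (hEV : (E i ∩ V).Nonempty) :
    ∃ L, ∃ u : Fin (L + 1 + 1) → Fin N, Adm p u ∧ u 0 = i ∧ u (Fin.last (L + 1)) = i ∧
      fWord f u '' E i ⊆ V := by
  obtain ⟨x, hxE, hxV⟩ := hEV
  obtain ⟨ε, hε, hball⟩ := Metric.isOpen_iff.1 hV x hxV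
  obtain ⟨n, hn⟩ : ∃ n, ∀ j, (K : ℝ) ^ (n + 1) * Metric.diam (E j) < ε := by
    have hlim (j : Fin N) : Tendsto (fun n => (K : ℝ) ^ n * Metric.diam (E j)) atTop (𝓝 0) := by
      simpa using (tendsto_pow_atTop_nhds_zero_of_lt_one K.coe_nonneg hK).mul_const _
    have hsmall : ∀ᶠ n in atTop, ∀ j, (K : ℝ) ^ n * Metric.diam (E j) < ε :=
      eventually_all.2 fun j => (hlim j).eventually (gt_mem_nhds hε)
    obtain ⟨n, hn⟩ := eventually_atTop.1 hsmall
    exact ⟨n, hn (n + 1) n.le_succ⟩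
  -- A covering word of positive length `n + 1` makes the loop below nonempty.
  obtain ⟨w, hw, hw0, hxw⟩ := exists_adm_mem_image_fWord f E hE (n + 1) hxE
  have hwV : fWord f w '' E (w (Fin.last (n + 1))) ⊆ V := by
    have hLip := hw.lipschitzWith_fWord f hf
    refine fun y hy => hball (Metric.mem_ball.2 (lt_of_le_of_lt ?_ (hn (w (Fin.last (n + 1))))))
    calc dist y x ≤ Metric.diam (fWord f w '' E (w (Fin.last (n + 1)))) :=
          Metric.dist_le_diam_of_mem (hLip.isBounded_image (hEb _)) hy hxw
      _ ≤ _ := by simpa using hLip.diam_image_le _ (hEb _)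
  obtain ⟨k, hk⟩ := hirr (w (Fin.last (n + 1))) i
  obtain ⟨v, hv, hv0, hvl⟩ := exists_adm_of_pow_pos hp hk
  obtain ⟨u, hu, hu0, hul, hfu⟩ := hw.exists_append f hv hv0.symm
  refine ⟨k + n, u, hu, hu0.trans hw0, hul.trans hvl, ?_⟩
  rw [hfu, image_comp]
  exact (image_mono (by simpa [hv0, hvl] using hv.image_fWord_subset f E hEmaps)).trans hwV

end Words

theorem stmt17_general {d : ℕ} {N : ℕ}
    (p : Fin N → Fin N → ℝ) (s c : Fin N → Fin N → ℝ)
    (hnonneg : ∀ i j, 0 ≤ p i j)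
    (hirr : ∀ i j : Fin N, ∃ n : ℕ, 0 < n ∧ 0 < ((Matrix.of p) ^ n) i j)
    (hcs : ∀ i j, 0 < p i j → 0 < c i j ∧ c i j ≤ s i j ∧ s i j < 1)
    (f : Fin N → Fin N → EuclideanSpace ℝ (Fin d) → EuclideanSpace ℝ (Fin d))
    (hbiLip : ∀ i j, 0 < p i j → ∀ x y,
      c i j * dist x y ≤ dist (f i j x) (f i j y) ∧
      dist (f i j x) (f i j y) ≤ s i j * dist x y)
    (E : Fin N → Set (EuclideanSpace ℝ (Fin d)))
    (hEc : ∀ i, IsCompact (E i)) (hEne : ∀ i, (E i).Nonempty)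
    (hEinv : ∀ i, E i = ⋃ j, ⋃ (_ : 0 < p i j), f i j '' E j)
    -- strong open set condition
    (U : Fin N → Set (EuclideanSpace ℝ (Fin d)))
    (hUopen : ∀ i, IsOpen (U i))
    (hUdisj : ∀ i j k l, 0 < p i j → 0 < p k l → (i, j) ≠ (k, l) →
      f i j '' U j ∩ f k l '' U l = ∅)
    (hUnest : ∀ i j, 0 < p i j → f i j '' U j ⊆ U i)
    (hUE : ∀ i, (E i ∩ U i).Nonempty) :
    ∀ m : ℕ, 1 ≤ m →
      ∃ (σlen : Fin N → ℕ)
        (σ : (i : Fin N) → Fin (σlen i + 1 + 1) → Fin N),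
        (∀ i, Adm p (σ i)) ∧
        (∀ i, σ i 0 = i) ∧ (∀ i, σ i (Fin.last (σlen i + 1)) = i) ∧
        (∀ i, fWord f (σ i) '' E i ⊆ U i) ∧
        ∃ F : Fin N → Set (EuclideanSpace ℝ (Fin d)),
          (∀ i, IsCompact (F i)) ∧ (∀ i, (F i).Nonempty) ∧
          (∀ i, F i ⊆ E i) ∧
          (∀ i, F i = ⋃ w ∈ Finset.univ.filter
              (fun w : Fin (m + 1) → Fin N => Adm p w ∧ w 0 = i),
            (fWord f w ∘ fWord f (σ (w (Fin.last m)))) '' F (w (Fin.last m))) ∧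
          (∀ w τ : Fin (m + 1) → Fin N, Adm p w → Adm p τ → w ≠ τ →
            (fWord f w ∘ fWord f (σ (w (Fin.last m)))) '' F (w (Fin.last m)) ∩
              (fWord f τ ∘ fWord f (σ (τ (Fin.last m)))) '' F (τ (Fin.last m)) = ∅) := by
  intro m hm
  obtain ⟨m, rfl⟩ : ∃ k, m = k + 1 := ⟨m - 1, by omega⟩
  have hEmaps (i j : Fin N) (hij : 0 < p i j) : f i j '' E j ⊆ E i :=
    (hEinv i).symm ▸ subset_iUnion₂_of_subset j hij subset_rfl
  have hinj (i j : Fin N) (hij : 0 < p i j) : Injective (f i j) := fun x y hxy => by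
    have h := (hbiLip i j hij x y).1
    rw [hxy, dist_self] at h
    exact dist_le_zero.1 (nonpos_of_mul_nonpos_right h (hcs i j hij).1)
  obtain ⟨K, hK1, hK⟩ : ∃ K < 1, ∀ i j, 0 < p i j → LipschitzWith K (f i j) := by
    obtain ⟨K, hK1, hK⟩ := exists_lipschitzWith_lt_one (P := fun q : Fin N × Fin N => 0 < p q.1 q.2)
      (g := fun q => f q.1 q.2) fun q hq => ⟨_, Real.toNNReal_lt_one.2 (hcs _ _ hq).2.2,
        LipschitzWith.of_dist_le' fun x y => (hbiLip _ _ hq x y).2⟩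
    exact ⟨K, hK1, fun i j => hK (i, j)⟩
  choose σlen σ hσ hσ0 hσl hσU using fun i => exists_adm_loop_image_subset f hK1 hK hnonneg
    (fun i j => (hirr i j).imp fun _ => And.right) (fun i => (hEc i).isBounded)
    (fun i => (hEinv i).subset) hEmaps (hUopen i) (hUE i)
  have hσE (j : Fin N) : fWord f (σ j) '' E j ⊆ E j := by
    simpa [hσ0, hσl] using (hσ j).image_fWord_subset f E hEmaps
  obtain ⟨F, hFE, hFc, hFne, hF⟩ := exists_hutchinson_fWord_loop_eq f
    (fun i j hij => (hK i j hij).continuous) hinj hEc hEne (fun i => (hEinv i).subset) hEmaps hσ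
    hσE (m + 1)
  refine ⟨σlen, σ, hσ, hσ0, hσl, hσU, F, hFc, hFne, hFE, fun i => (congrFun hF i).symm,
    fun w τ hw hτ hne => ?_⟩
  have hFU (j : Fin N) : fWord f (σ j) '' F j ⊆ U j := (image_mono (hFE j)).trans (hσU j)
  rw [← disjoint_iff_inter_eq_empty, image_comp, image_comp]
  exact (hw.disjoint_image_fWord f U (fun i j k l hij hkl h => disjoint_iff_inter_eq_empty.2
    (hUdisj i j k l hij hkl h)) hUnest hinj hτ hne).mono (image_mono (hFU _)) (image_mono (hFU _))

theorem stmt17 {d : ℕ} {N : ℕ} (hN : 2 ≤ N)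
    (p : Fin N → Fin N → ℝ) (s c : Fin N → Fin N → ℝ)
    (hrow : ∀ i, ∑ j, p i j = 1) (hnonneg : ∀ i j, 0 ≤ p i j)
    (hirr : ∀ i j : Fin N, ∃ n : ℕ, 0 < n ∧ 0 < ((Matrix.of p) ^ n) i j)
    (hcs : ∀ i j, 0 < p i j → 0 < c i j ∧ c i j ≤ s i j ∧ s i j < 1)
    (f : Fin N → Fin N → EuclideanSpace ℝ (Fin d) → EuclideanSpace ℝ (Fin d))
    (hbiLip : ∀ i j, 0 < p i j → ∀ x y,
      c i j * dist x y ≤ dist (f i j x) (f i j y) ∧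
      dist (f i j x) (f i j y) ≤ s i j * dist x y)
    (E : Fin N → Set (EuclideanSpace ℝ (Fin d)))
    (hEc : ∀ i, IsCompact (E i)) (hEne : ∀ i, (E i).Nonempty)
    (hEinv : ∀ i, E i = ⋃ j, ⋃ (_ : 0 < p i j), f i j '' E j)
    -- strong open set condition
    (U : Fin N → Set (EuclideanSpace ℝ (Fin d)))
    (hUopen : ∀ i, IsOpen (U i)) (hUne : ∀ i, (U i).Nonempty)
    (hUbdd : ∀ i, Bornology.IsBounded (U i))
    (hUdisj : ∀ i j k l, 0 < p i j → 0 < p k l → (i, j) ≠ (k, l) →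
      f i j '' U j ∩ f k l '' U l = ∅)
    (hUnest : ∀ i j, 0 < p i j → f i j '' U j ⊆ U i)
    (hUE : ∀ i, (E i ∩ U i).Nonempty) :
    ∀ m : ℕ, 1 ≤ m →
      ∃ (σlen : Fin N → ℕ)
        (σ : (i : Fin N) → Fin (σlen i + 1 + 1) → Fin N),
        (∀ i, Adm p (σ i)) ∧
        (∀ i, σ i 0 = i) ∧ (∀ i, σ i (Fin.last (σlen i + 1)) = i) ∧
        (∀ i, fWord f (σ i) '' E i ⊆ U i) ∧
        ∃ F : Fin N → Set (EuclideanSpace ℝ (Fin d)),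
          (∀ i, IsCompact (F i)) ∧ (∀ i, (F i).Nonempty) ∧
          (∀ i, F i ⊆ E i) ∧
          (∀ i, F i = ⋃ w ∈ Finset.univ.filter
              (fun w : Fin (m + 1) → Fin N => Adm p w ∧ w 0 = i),
            (fWord f w ∘ fWord f (σ (w (Fin.last m)))) '' F (w (Fin.last m))) ∧
          (∀ w τ : Fin (m + 1) → Fin N, Adm p w → Adm p τ → w ≠ τ →
            (fWord f w ∘ fWord f (σ (w (Fin.last m)))) '' F (w (Fin.last m)) ∩
              (fWord f τ ∘ fWord f (σ (τ (Fin.last m)))) '' F (τ (Fin.last m)) = ∅) :=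
  stmt17_general p s c hnonneg hirr hcs f hbiLip E hEc hEne hEinv U hUopen hUdisj hUnest hUE
end

section
/- Let l_r ∈ (0,∞) be the unique solution of φ_r(l_r/(r+l_r)) = 1, where φ_r(t) is the spectral radius of [(p_{ij} c_{ij}^r)^t]. For each m let l_{m,r} satisfy Σ_{w∈Ω_m}(p_w C_w^r)^{l_{m,r}/(r+l_{m,r})} = 1, where C_w = c_w c_{σ^{w_m}}. Then there is no L < l_r with l_{m,r} ≤ L for all m; that is, sup_m l_{m,r} ≥ l_r. -/
open scoped Classical BigOperators

noncomputable def specRad {N : ℕ} (M : Matrix (Fin N) (Fin N) ℝ) : ℝ :=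
  (spectralRadius ℂ (M.map (algebraMap ℝ ℂ))).toReal

noncomputable def pWord {N : ℕ} (pv : Fin N → ℝ) (p : Fin N → Fin N → ℝ) {m : ℕ}
    (w : Fin (m + 1) → Fin N) : ℝ :=
  pv (w 0) * ∏ i : Fin m, p (w i.castSucc) (w i.succ)

noncomputable def sWord {N : ℕ} (s : Fin N → Fin N → ℝ) {m : ℕ}
    (w : Fin (m + 1) → Fin N) : ℝ :=
  ∏ i : Fin m, s (w i.castSucc) (w i.succ)

theorem stmt18 {N : ℕ} (hN : 2 ≤ N) (p c : Fin N → Fin N → ℝ) (pv : Fin N → ℝ)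
    (r : ℝ) (hr : 0 < r)
    (hrow : ∀ i, ∑ j, p i j = 1) (hnonneg : ∀ i j, 0 ≤ p i j)
    (hirr : ∀ i j : Fin N, ∃ n : ℕ, 0 < n ∧ 0 < ((Matrix.of p) ^ n) i j)
    (hc : ∀ i j, 0 < p i j → 0 < c i j ∧ c i j < 1)
    (hpv : ∀ i, 0 < pv i) (hpv1 : ∑ i, pv i = 1)
    (hstat : ∀ j, ∑ i, pv i * p i j = pv j)
    (lr : ℝ) (hlr : 0 < lr)
    (hlreq : specRad (Matrix.of fun i j => (p i j * c i j ^ r) ^ (lr / (r + lr))) = 1)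
    -- products of the lower contraction ratios along the fixed loops σ^i
    (cσ : Fin N → ℝ) (hcσ : ∀ i, 0 < cσ i ∧ cσ i < 1)
    (η ζ : ℝ)
    (hη : IsLeast (Set.range fun i => cσ i ^ r) η)
    (hζ : IsGreatest {x | ∃ i j, 0 < p i j ∧ x = p i j * c i j ^ r} ζ)
    (hζ1 : ζ < 1)
    (Gr : ℝ) (hGr1 : 1 ≤ Gr)
    (hGr : ∀ m : ℕ, 1 ≤ m →
      Gr ^ (-(lr / (r + lr))) ≤
        (∑ w ∈ Finset.univ.filter (fun w : Fin (m + 1) → Fin N => Adm p w),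
          (pWord pv p w * sWord c w ^ r) ^ (lr / (r + lr))) ∧
      (∑ w ∈ Finset.univ.filter (fun w : Fin (m + 1) → Fin N => Adm p w),
          (pWord pv p w * sWord c w ^ r) ^ (lr / (r + lr))) ≤ Gr ^ (lr / (r + lr)))
    (lm : ℕ → ℝ) (hlm0 : ∀ m, 1 ≤ m → 0 < lm m)
    (hlmeq : ∀ m : ℕ, 1 ≤ m →
      ∑ w ∈ Finset.univ.filter (fun w : Fin (m + 1) → Fin N => Adm p w),
        (pWord pv p w * (sWord c w * cσ (w (Fin.last m))) ^ r) ^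
          (lm m / (r + lm m)) = 1)
    (L : ℝ) (hL : L < lr) (hlmL : ∀ m : ℕ, 1 ≤ m → lm m ≤ L) :
    False := by
  classical
  set θ := lr / (r + lr) with hθdef
  set T := L / (r + L) with hTdef
  have hL0 : 0 < L := lt_of_lt_of_le (hlm0 1 le_rfl) (hlmL 1 le_rfl)
  have hrL : 0 < r + L := by linarith
  have hrlr : 0 < r + lr := by linarith
  have hT0 : 0 < T := div_pos hL0 hrL
  have hθ0 : 0 < θ := div_pos hlr hrlr
  have hTθ : T < θ := by
    rw [hTdef, hθdef, div_lt_div_iff₀ hrL hrlr]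
    nlinarith
  -- η facts
  obtain ⟨i₀, hi₀⟩ := hη.1
  have hη0 : 0 < η := hi₀ ▸ Real.rpow_pos_of_pos (hcσ i₀).1 r
  have hη1 : η < 1 := hi₀ ▸ Real.rpow_lt_one (hcσ i₀).1.le (hcσ i₀).2 hr
  -- ζ facts
  obtain ⟨iζ, jζ, hpζ, hζeq⟩ := hζ.1
  have hζ0 : 0 < ζ := by
    rw [hζeq]
    exact mul_pos hpζ (Real.rpow_pos_of_pos (hc _ _ hpζ).1 r)
  -- the key bound for each m ≥ 1
  have key : ∀ m : ℕ, 1 ≤ m →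
      η ^ T * (ζ ^ (T - θ)) ^ m * Gr ^ (-θ) ≤ 1 := by
    intro m hm
    set t := lm m / (r + lm m) with htdef
    have hlm : 0 < lm m := hlm0 m hm
    have hrlm : 0 < r + lm m := by linarith
    have ht0 : 0 < t := div_pos hlm hrlm
    have htT : t ≤ T := by
      rw [htdef, hTdef, div_le_div_iff₀ hrlm hrL]
      nlinarith [hlmL m hm]
    have htθ : t < θ := lt_of_le_of_lt htT hTθ
    -- termwise facts
    have hterm : ∀ w ∈ Finset.univ.filter (fun w : Fin (m + 1) → Fin N => Adm p w),
        η ^ T * ζ ^ ((m : ℝ) * (T - θ)) *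
          (pWord pv p w * sWord c w ^ r) ^ θ ≤
        (pWord pv p w * (sWord c w * cσ (w (Fin.last m))) ^ r) ^ t := by
      intro w hw
      rw [Finset.mem_filter] at hw
      have hadm : Adm p w := hw.2
      have hppos : ∀ i : Fin m, 0 < p (w i.castSucc) (w i.succ) := hadm
      have hcpos : ∀ i : Fin m, 0 < c (w i.castSucc) (w i.succ) :=
        fun i => (hc _ _ (hppos i)).1
      have hpW : 0 < pWord pv p w :=
        mul_pos (hpv _) (Finset.prod_pos fun i _ => hppos i)
      have hsW : 0 < sWord c w :=
        Finset.prod_pos fun i _ => hcpos i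
      set a := pWord pv p w * sWord c w ^ r with hadef
      have ha0 : 0 < a := mul_pos hpW (Real.rpow_pos_of_pos hsW r)
      -- a ≤ ζ ^ m
      have haζ : a ≤ ζ ^ (m : ℝ) := by
        have hpv1' : pv (w 0) ≤ 1 := by
          rw [← hpv1]
          exact Finset.single_le_sum (fun i _ => (hpv i).le) (Finset.mem_univ _)
        have hprod : sWord c w ^ r =
            ∏ i : Fin m, c (w i.castSucc) (w i.succ) ^ r := by
          rw [sWord, ← Real.finset_prod_rpow _ _ (fun i _ => (hcpos i).le)]
        have hle : (∏ i : Fin m, p (w i.castSucc) (w i.succ)) *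
            (∏ i : Fin m, c (w i.castSucc) (w i.succ) ^ r) ≤ ζ ^ m := by
          rw [← Finset.prod_mul_distrib]
          calc (∏ i : Fin m, p (w i.castSucc) (w i.succ) *
                  c (w i.castSucc) (w i.succ) ^ r)
              ≤ ∏ _i : Fin m, ζ := by
                refine Finset.prod_le_prod (fun i _ => ?_) (fun i _ => ?_)
                · exact (mul_pos (hppos i)
                    (Real.rpow_pos_of_pos (hcpos i) r)).le
                · exact hζ.2 ⟨_, _, hppos i, rfl⟩
            _ = ζ ^ m := by simp
        calc a = pv (w 0) * ((∏ i : Fin m, p (w i.castSucc) (w i.succ)) *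
              (∏ i : Fin m, c (w i.castSucc) (w i.succ) ^ r)) := by
                rw [hadef, pWord, hprod]; ring
          _ ≤ 1 * (ζ ^ m) := by
              refine mul_le_mul hpv1' hle ?_ zero_le_one
              exact mul_nonneg (Finset.prod_nonneg fun i _ => (hppos i).le)
                (Finset.prod_nonneg fun i _ =>
                  (Real.rpow_pos_of_pos (hcpos i) r).le)
          _ = ζ ^ (m : ℝ) := by rw [one_mul, Real.rpow_natCast]
      -- split exponent
      have hsplit : a ^ t = a ^ θ * a ^ (t - θ) := by
        rw [← Real.rpow_add ha0]; ring_nf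
      have h1 : ζ ^ ((m : ℝ) * (t - θ)) ≤ a ^ (t - θ) := by
        have := Real.rpow_le_rpow_of_nonpos ha0 haζ (by linarith : t - θ ≤ 0)
        calc ζ ^ ((m : ℝ) * (t - θ)) = (ζ ^ (m : ℝ)) ^ (t - θ) := by
              rw [← Real.rpow_mul hζ0.le]
          _ ≤ a ^ (t - θ) := this
      have h2 : ζ ^ ((m : ℝ) * (T - θ)) ≤ ζ ^ ((m : ℝ) * (t - θ)) := by
        apply Real.rpow_le_rpow_of_exponent_ge hζ0 hζ1.le
        have : (0:ℝ) ≤ (m : ℝ) := Nat.cast_nonneg m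
        nlinarith
      have h3 : η ^ T ≤ (cσ (w (Fin.last m)) ^ r) ^ t := by
        have hηle : η ≤ cσ (w (Fin.last m)) ^ r := hη.2 ⟨w (Fin.last m), rfl⟩
        calc η ^ T ≤ η ^ t := Real.rpow_le_rpow_of_exponent_ge hη0 hη1.le htT
          _ ≤ (cσ (w (Fin.last m)) ^ r) ^ t :=
            Real.rpow_le_rpow hη0.le hηle ht0.le
      have hexp : (pWord pv p w * (sWord c w * cσ (w (Fin.last m))) ^ r) ^ t =
          a ^ t * (cσ (w (Fin.last m)) ^ r) ^ t := by
        rw [Real.mul_rpow hsW.le (hcσ _).1.le, ← mul_assoc, ← hadef,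
          Real.mul_rpow ha0.le (Real.rpow_pos_of_pos (hcσ _).1 r).le]
      rw [hexp, hsplit]
      have haθ : 0 < a ^ θ := Real.rpow_pos_of_pos ha0 θ
      calc η ^ T * ζ ^ ((m : ℝ) * (T - θ)) * a ^ θ
          ≤ η ^ T * ζ ^ ((m : ℝ) * (t - θ)) * a ^ θ := by
            have := mul_le_mul_of_nonneg_right
              (mul_le_mul_of_nonneg_left (h2) (by positivity : (0:ℝ) ≤ η ^ T))
              haθ.le
            exact this
        _ ≤ η ^ T * a ^ (t - θ) * a ^ θ := by
            have := mul_le_mul_of_nonneg_right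
              (mul_le_mul_of_nonneg_left h1 (by positivity : (0:ℝ) ≤ η ^ T))
              haθ.le
            exact this
        _ ≤ (cσ (w (Fin.last m)) ^ r) ^ t * a ^ (t - θ) * a ^ θ := by
            have := mul_le_mul_of_nonneg_right
              (mul_le_mul_of_nonneg_right h3 (by positivity : (0:ℝ) ≤ a ^ (t - θ)))
              haθ.le
            exact this
        _ = a ^ θ * a ^ (t - θ) * (cσ (w (Fin.last m)) ^ r) ^ t := by ring
      -- sum up
    have hsum := Finset.sum_le_sum hterm
    rw [hlmeq m hm] at hsum
    rw [← Finset.mul_sum] at hsum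
    have hGrm := (hGr m hm).1
    have hfac : 0 ≤ η ^ T * ζ ^ ((m : ℝ) * (T - θ)) := by positivity
    have hchain : η ^ T * ζ ^ ((m : ℝ) * (T - θ)) * Gr ^ (-θ) ≤ 1 :=
      le_trans (mul_le_mul_of_nonneg_left hGrm hfac) hsum
    have hpow : ζ ^ ((m : ℝ) * (T - θ)) = (ζ ^ (T - θ)) ^ m := by
      rw [mul_comm, Real.rpow_mul hζ0.le, Real.rpow_natCast]
    rw [← hpow]
    exact hchain
  -- derive contradiction
  have hb : 1 < ζ ^ (T - θ) :=
    Real.one_lt_rpow_of_pos_of_lt_one_of_neg hζ0 hζ1 (by linarith)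
  have hGrθ : 0 < Gr ^ (-θ) := Real.rpow_pos_of_pos (by linarith) _
  have hηT : 0 < η ^ T := Real.rpow_pos_of_pos hη0 _
  obtain ⟨n, hn⟩ := pow_unbounded_of_one_lt
    ((η ^ T * Gr ^ (-θ))⁻¹) hb
  have hkey := key (n + 1) (Nat.le_add_left 1 n)
  have hmono : (ζ ^ (T - θ)) ^ n ≤ (ζ ^ (T - θ)) ^ (n + 1) :=
    pow_le_pow_right₀ hb.le (Nat.le_succ n)
  have hx : 0 < η ^ T * Gr ^ (-θ) := mul_pos hηT hGrθ
  have h1 : 1 < (η ^ T * Gr ^ (-θ)) * (ζ ^ (T - θ)) ^ n := by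
    rw [← mul_inv_cancel₀ hx.ne']
    exact mul_lt_mul_of_pos_left hn hx
  have h3 : (η ^ T * Gr ^ (-θ)) * (ζ ^ (T - θ)) ^ (n + 1) ≤ 1 := by
    calc (η ^ T * Gr ^ (-θ)) * (ζ ^ (T - θ)) ^ (n + 1)
        = η ^ T * (ζ ^ (T - θ)) ^ (n + 1) * Gr ^ (-θ) := by ring
      _ ≤ 1 := hkey
  have h4 : (η ^ T * Gr ^ (-θ)) * (ζ ^ (T - θ)) ^ n ≤
      (η ^ T * Gr ^ (-θ)) * (ζ ^ (T - θ)) ^ (n + 1) :=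
    mul_le_mul_of_nonneg_left hmono hx.le
  linarith
end
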